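/- There do not exist a finite set K ⊆ ℕ and a K-symmetric subset δ ⊆ I such that for every ν ∈ ℕ exactly one of the two points (ν, 0) and (ν, 1) belongs to δ. (This is the combinatorial core of the fact that the Asser axiom choice_*^1 fails in the permutation model Σ₂: no symmetric predicate can choose one element from each unordered pair {ν} × Fin 2.) -/
import Mathlib


/-- Membership in the group `𝔊` of automorphisms underlying the permutation model `Σ₂`:
permutations of `I = ℕ × Fin 2` acting by a permutation of `ℕ` together with, for each
`n`, a permutation of the pair `{n} × Fin 2`. -/
def InG (π : Equiv.Perm (ℕ × Fin 2)) : Prop :=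
  ∃ (φ : Equiv.Perm ℕ) (πn : ℕ → Equiv.Perm (Fin 2)),
    ∀ (n : ℕ) (m : Fin 2), π (n, m) = (φ n, πn n m)

/-- `π` fixes every point of `K × Fin 2`. -/
def FixesK (π : Equiv.Perm (ℕ × Fin 2)) (K : Set ℕ) : Prop :=
  ∀ ξ : ℕ × Fin 2, ξ.1 ∈ K → π ξ = ξ

/-- `δ ⊆ I` is `K`-symmetric: `π '' δ = δ` for every `π ∈ 𝔊` fixing `K × Fin 2` pointwise. -/
def SymmSet (K : Set ℕ) (δ : Set (ℕ × Fin 2)) : Prop :=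
  ∀ π : Equiv.Perm (ℕ × Fin 2), InG π → FixesK π K → π '' δ = δ

/-- `ρ ⊆ I × I` is `K`-symmetric: for every `π ∈ 𝔊` fixing `K × Fin 2` pointwise,
`(π ξ, π η) ∈ ρ ↔ (ξ, η) ∈ ρ`. -/
def SymmRel (K : Set ℕ) (ρ : Set ((ℕ × Fin 2) × (ℕ × Fin 2))) : Prop :=
  ∀ π : Equiv.Perm (ℕ × Fin 2), InG π → FixesK π K →
    ∀ ξ η : ℕ × Fin 2, ((π ξ, π η) ∈ ρ ↔ (ξ, η) ∈ ρ)

/-- No symmetric predicate can choose one element from each unordered pair `{ν} × Fin 2`: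
there are no finite `K ⊆ ℕ` and `K`-symmetric `δ ⊆ I` such that for every `ν` exactly one
of `(ν, 0)`, `(ν, 1)` belongs to `δ`. -/
theorem stmt_5 :
    ¬ ∃ (K : Set ℕ) (δ : Set (ℕ × Fin 2)), K.Finite ∧ SymmSet K δ ∧
      ∀ ν : ℕ, Xor' (((ν, 0) : ℕ × Fin 2) ∈ δ) (((ν, 1) : ℕ × Fin 2) ∈ δ) := by
  rintro ⟨K, δ, hKfin, hsym, hxor⟩
  -- pick ν outside K
  obtain ⟨ν, hν⟩ := Set.Infinite.nonempty ((Set.infinite_univ).diff hKfin)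
  have hνK : ν ∉ K := hν.2
  -- the permutation swapping the pair at coordinate ν
  set πn : ℕ → Equiv.Perm (Fin 2) :=
    fun n => if n = ν then Equiv.swap 0 1 else Equiv.refl _ with hπn
  set π : Equiv.Perm (ℕ × Fin 2) := Equiv.prodShear (Equiv.refl ℕ) πn with hπ
  have hInG : InG π := ⟨Equiv.refl ℕ, πn, fun n m => rfl⟩
  have hfix : FixesK π K := by
    rintro ⟨n, m⟩ hn
    have hne : n ≠ ν := fun h => hνK (h ▸ hn)
    simp [hπ, hπn, Equiv.prodShear, hne]
  have himg := hsym π hInG hfix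
  have key : ∀ m : Fin 2, ((ν, m) : ℕ × Fin 2) ∈ δ → π (ν, m) ∈ δ := by
    intro m hm
    rw [← himg]
    exact ⟨_, hm, rfl⟩
  have h0 : π (ν, (0:Fin 2)) = (ν, 1) := by
    simp [hπ, hπn, Equiv.prodShear]
  have h1 : π (ν, (1:Fin 2)) = (ν, 0) := by
    simp [hπ, hπn, Equiv.prodShear]
  rcases hxor ν with ⟨ha, hb⟩ | ⟨ha, hb⟩
  · exact hb (h0 ▸ key 0 ha)
  · exact hb (h1 ▸ key 1 ha)
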